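/- Let g, g' : ℝ² → [0,∞) be continuous, compactly supported, and not identically zero, and fix θ ∈ ℝ. Then the ratio N_{g,g'}(θ − τ̄) / N_{g,g'}(θ) tends to 0 as τ̄ → ∞; equivalently, N_{g,g'}(θ̄) → 0 as θ̄ → −∞. -/

import Mathlib

/-!
On `(0, 1]` the factor `j^{θ̄}(u')` is at most `C e^{θ̄ u'}`, because
`u^{t-1}/Γ(u) = u^t/Γ(u+1)` stays bounded near `0` and `Γ` grows exponentially. Bounding also
`g(x₂)`, `g'(x₁')`, `g'(x₂')` by sup norms, Tonelli lets each of `x₂, x₁', x₂'` and then `y', y`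
integrate away one heat kernel (of mass at most one), which leaves
`N_{g,g'}(θ̄) ≤ ‖g‖₁ ‖g‖_∞ ‖g'‖_∞² · 4πC ∫₀^∞ e^{θ̄ u'} du' = O(1/|θ̄|)` as `θ̄ → -∞`.
The ratio then tends to `0` because its denominator does not depend on `τ̄`.
-/

open MeasureTheory Set ENNReal

noncomputable section

abbrev Plane := EuclideanSpace ℝ (Fin 2)

/-- The 2d heat kernel `p(t,x) = (2πt)⁻¹ exp(−|x|²/(2t))`. -/
def heatK (t : ℝ) (x : Plane) : ℝ :=
  (2 * Real.pi * t)⁻¹ * Real.exp (-‖x‖ ^ 2 / (2 * t))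

/-- `j^{θ̄}(t) = e^{θ̄ t} ∫₀^∞ u^{t−1}/Γ(u) du`. -/
def jfn (θ : ℝ) (t : ℝ) : ℝ :=
  Real.exp (θ * t) * ∫ u in Ioi (0 : ℝ), u ^ (t - 1) / Real.Gamma u

/-- The kernel `W^{θ̄}(t,(x₁,x₂),(x₁',x₂'))`, defined as a fourfold iterated integral with
values in `[0,∞]`. Here `u'' = t − u − u'`. -/
def Wker (θ t : ℝ) (x₁ x₂ x₁' x₂' : Plane) : ℝ≥0∞ :=
  ∫⁻ u in Ioo (0 : ℝ) t, ∫⁻ u' in Ioo (0 : ℝ) (t - u), ∫⁻ y : Plane, ∫⁻ y' : Plane,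
    ENNReal.ofReal (heatK u (x₁ - y) * heatK u (x₂ - y) *
      (4 * Real.pi * jfn θ u' * heatK (u' / 2) (y - y')) *
      (heatK (t - u - u') (y' - x₁') * heatK (t - u - u') (y' - x₂')))

/-- The pairing `N_{g,g'}(θ̄) = ∫ g(x₁)g(x₂) W^{θ̄}(1,(x₁,x₂),(x₁',x₂')) g'(x₁')g'(x₂') dx`. -/
def Npair (g g' : Plane → ℝ) (θ : ℝ) : ℝ≥0∞ :=
  ∫⁻ x₁ : Plane, ∫⁻ x₂ : Plane, ∫⁻ x₁' : Plane, ∫⁻ x₂' : Plane,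
    ENNReal.ofReal (g x₁ * g x₂) * Wker θ 1 x₁ x₂ x₁' x₂' *
      ENNReal.ofReal (g' x₁' * g' x₂')

open Real Filter Topology

theorem heatK_nonneg {t : ℝ} (ht : 0 ≤ t) (x : Plane) : 0 ≤ heatK t x := by
  unfold heatK; positivity

@[fun_prop]
theorem Measurable.heatK {α : Type*} [MeasurableSpace α] {f : α → ℝ} {g : α → Plane}
    (hf : Measurable f) (hg : Measurable g) : Measurable fun a => heatK (f a) (g a) := by
  unfold _root_.heatK; fun_prop

theorem lintegral_ofReal_heatK_le_one (t : ℝ) : ∫⁻ x, ENNReal.ofReal (heatK t x) ≤ 1 := by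
  rcases le_or_gt t 0 with ht | ht
  · have h0 : ∀ x, ENNReal.ofReal (heatK t x) = 0 := fun x =>
      ofReal_eq_zero.2 <| mul_nonpos_of_nonpos_of_nonneg
        (inv_nonpos.2 (mul_nonpos_of_nonneg_of_nonpos (by positivity) ht)) (exp_nonneg _)
    simp [h0]
  · have hb : 0 < (2 * t)⁻¹ := by positivity
    have hI := GaussianFourier.integral_rexp_neg_mul_sq_norm (V := Plane) hb
    have hint : Integrable fun x : Plane => exp (-(2 * t)⁻¹ * ‖x‖ ^ 2) :=
      Integrable.of_integral_ne_zero (by rw [hI]; positivity)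
    have hK : ∀ x, heatK t x = (2 * π * t)⁻¹ * exp (-(2 * t)⁻¹ * ‖x‖ ^ 2) := fun x => by
      unfold heatK; ring_nf
    simp_rw [hK]
    rw [← ofReal_integral_eq_lintegral_ofReal (hint.const_mul _)
      (ae_of_all _ fun x => by positivity), integral_const_mul, hI, finrank_euclideanSpace_fin]
    refine ofReal_le_one.2 (le_of_eq ?_)
    norm_num
    field_simp

theorem lintegral_mul_ofReal_heatK_sub_le (c : ℝ≥0∞) (t : ℝ) (z : Plane) :
    ∫⁻ x, c * ENNReal.ofReal (heatK t (z - x)) ≤ c :=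
  calc ∫⁻ x, c * ENNReal.ofReal (heatK t (z - x))
      = c * ∫⁻ x, ENNReal.ofReal (heatK t (x - z)) := by
        rw [lintegral_const_mul _ (by fun_prop)]
        simp_rw [heatK, norm_sub_rev z]
    _ = c * ∫⁻ x, ENNReal.ofReal (heatK t x) := by
        rw [lintegral_sub_right_eq_self (fun x => ENNReal.ofReal (heatK t x)) z]
    _ ≤ c := mul_le_of_le_one_right' (lintegral_ofReal_heatK_le_one t)

theorem lintegral_lintegral_le_of_le {α β : Type*} [MeasurableSpace α] [MeasurableSpace β]
    {μ : Measure α} {ν : Measure β} [SFinite μ] [SFinite ν] {f : α → β → ℝ≥0∞}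
    {c : β → ℝ≥0∞} (hf : Measurable (Function.uncurry f)) (h : ∀ b, ∫⁻ a, f a b ∂μ ≤ c b) :
    ∫⁻ a, ∫⁻ b, f a b ∂ν ∂μ ≤ ∫⁻ b, c b ∂ν := by
  rw [lintegral_lintegral_swap hf.aemeasurable]
  exact lintegral_mono h

theorem lintegral_lintegral₄_mul_heatK_le {α β γ δ : Type*} [MeasurableSpace α]
    [MeasurableSpace β] [MeasurableSpace γ] [MeasurableSpace δ] {μ₁ : Measure α}
    {μ₂ : Measure β} {μ₃ : Measure γ} {μ₄ : Measure δ} [SFinite μ₁] [SFinite μ₂] [SFinite μ₃]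
    [SFinite μ₄] {F : α → β → γ → δ → ℝ≥0∞} {T : α → β → γ → δ → ℝ}
    {Z : α → β → γ → δ → Plane} (hF : Measurable ↿F) (hT : Measurable ↿T)
    (hZ : Measurable ↿Z) :
    ∫⁻ x, ∫⁻ a, ∫⁻ b, ∫⁻ c, ∫⁻ d,
        F a b c d * ENNReal.ofReal (heatK (T a b c d) (Z a b c d - x)) ∂μ₄ ∂μ₃ ∂μ₂ ∂μ₁
      ≤ ∫⁻ a, ∫⁻ b, ∫⁻ c, ∫⁻ d, F a b c d ∂μ₄ ∂μ₃ ∂μ₂ ∂μ₁ :=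
  lintegral_lintegral_le_of_le (by fun_prop) fun a =>
    lintegral_lintegral_le_of_le (by fun_prop) fun b =>
      lintegral_lintegral_le_of_le (by fun_prop) fun c =>
        lintegral_lintegral_le_of_le (by fun_prop) fun d =>
          lintegral_mul_ofReal_heatK_sub_le _ _ _

theorem lintegral_Ioi_ofReal_exp_mul {θ : ℝ} (hθ : θ < 0) :
    ∫⁻ u in Ioi 0, ENNReal.ofReal (exp (θ * u)) = ENNReal.ofReal (-θ)⁻¹ := by
  rw [← ofReal_integral_eq_lintegral_ofReal (integrableOn_exp_mul_Ioi hθ 0)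
    (ae_of_all _ fun _ => exp_nonneg _), integral_exp_mul_Ioi hθ 0]
  simp [neg_div, inv_neg]

theorem Real.exp_neg_mul_rpow_le_Gamma {x a : ℝ} (hx : 1 ≤ x) (ha : 0 < a) :
    exp (-a) * a ^ (x - 1) ≤ Gamma x := by
  have hx0 : 0 < x := by linarith
  have hΓ := GammaIntegral_convergent hx0
  calc exp (-a) * a ^ (x - 1) = ∫ s in Ioi a, exp (-s) * a ^ (x - 1) := by
        rw [integral_mul_const, integral_exp_neg_Ioi]
    _ ≤ ∫ s in Ioi a, exp (-s) * s ^ (x - 1) :=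
        setIntegral_mono_on ((integrableOn_exp_neg_Ioi a).mul_const _)
          (hΓ.mono_set (Ioi_subset_Ioi ha.le)) measurableSet_Ioi fun s hs =>
            mul_le_mul_of_nonneg_left (rpow_le_rpow ha.le (le_of_lt hs) (by linarith))
              (exp_nonneg _)
    _ ≤ ∫ s in Ioi 0, exp (-s) * s ^ (x - 1) :=
        setIntegral_mono_set hΓ
          ((ae_restrict_mem measurableSet_Ioi).mono fun s (hs : 0 < s) => by positivity)
          (Ioi_subset_Ioi ha.le).eventuallyLE
    _ = Gamma x := (Gamma_eq_integral hx0).symm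

theorem rpow_sub_one_div_Gamma_le {t u : ℝ} (ht : t ∈ Ioc (0 : ℝ) 1) (hu : 0 < u) :
    u ^ (t - 1) / Gamma u ≤ 2 * exp 2 * exp (-Real.log 2 * u) := by
  have hl : 0 < Real.log 2 := log_pos one_lt_two
  rcases le_or_gt u 1 with hu1 | hu1
  · have hΓ : exp (-1) ≤ Gamma (u + 1) := by
      simpa using exp_neg_mul_rpow_le_Gamma (x := u + 1) (by linarith) one_pos
    have hhalf : (2 : ℝ)⁻¹ ≤ exp (-Real.log 2 * u) := by
      rw [← exp_log (inv_pos.2 two_pos), Real.log_inv]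
      exact exp_le_exp.2 (by nlinarith)
    calc u ^ (t - 1) / Gamma u = u ^ t / Gamma (u + 1) := by
          rw [Gamma_add_one hu.ne', rpow_sub_one hu.ne']
          field_simp
      _ ≤ 1 / exp (-1) :=
          div_le_div₀ zero_le_one (rpow_le_one hu.le hu1 ht.1.le) (exp_pos _) hΓ
      _ = exp 1 := by rw [one_div, ← exp_neg, neg_neg]
      _ ≤ exp 2 := exp_le_exp.2 (by norm_num)
      _ ≤ 2 * exp 2 * exp (-Real.log 2 * u) := by nlinarith [exp_pos 2]
  · have hΓ : exp (-2) * 2 ^ (u - 1) ≤ Gamma u := exp_neg_mul_rpow_le_Gamma hu1.le two_pos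
    calc u ^ (t - 1) / Gamma u ≤ 1 / (exp (-2) * 2 ^ (u - 1)) :=
          div_le_div₀ zero_le_one (rpow_le_one_of_one_le_of_nonpos hu1.le (by linarith [ht.2]))
            (by positivity) hΓ
      _ = exp (Real.log 2 + 2 + -Real.log 2 * u) := by
          rw [rpow_def_of_pos two_pos, ← exp_add, one_div, ← exp_neg]
          congr 1
          ring
      _ = 2 * exp 2 * exp (-Real.log 2 * u) := by rw [exp_add, exp_add, exp_log two_pos]

theorem jfn_le {θ t : ℝ} (ht : t ∈ Ioc (0 : ℝ) 1) :
    jfn θ t ≤ 2 * exp 2 / Real.log 2 * exp (θ * t) := by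
  have hl : 0 < Real.log 2 := log_pos one_lt_two
  have hI : ∫ u in Ioi (0 : ℝ), u ^ (t - 1) / Gamma u ≤ 2 * exp 2 / Real.log 2 :=
    calc ∫ u in Ioi (0 : ℝ), u ^ (t - 1) / Gamma u
        ≤ ∫ u in Ioi (0 : ℝ), 2 * exp 2 * exp (-Real.log 2 * u) :=
          integral_mono_of_nonneg
            ((ae_restrict_mem measurableSet_Ioi).mono fun u (hu : 0 < u) =>
              div_nonneg (rpow_nonneg hu.le _) (Gamma_pos_of_pos hu).le)
            ((integrableOn_exp_mul_Ioi (neg_lt_zero.2 hl) 0).const_mul _)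
            ((ae_restrict_mem measurableSet_Ioi).mono fun u hu => rpow_sub_one_div_Gamma_le ht hu)
      _ = 2 * exp 2 / Real.log 2 := by
          rw [integral_const_mul, integral_exp_mul_Ioi (neg_lt_zero.2 hl)]
          field_simp
          simp
  rw [jfn, mul_comm]
  exact mul_le_mul_of_nonneg_right hI (exp_nonneg _)

/-- Splitting the integrand of `Wker` into separate `ofReal` factors makes it vanish as soon as
`1 - u - u' ≤ 0` (where `heatK` is nonpositive), so the constraint `u' < 1 - u` can be dropped. -/
def Wmajorant (c θ : ℝ) (x₁ x₂ x₁' x₂' : Plane) : ℝ≥0∞ :=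
  ∫⁻ u in Ioo 0 1, ∫⁻ u' in Ioi 0, ∫⁻ y, ∫⁻ y',
    ENNReal.ofReal (c * exp (θ * u')) * ENNReal.ofReal (heatK u (x₁ - y)) *
      ENNReal.ofReal (heatK (u' / 2) (y - y')) * ENNReal.ofReal (heatK u (y - x₂)) *
      ENNReal.ofReal (heatK (1 - u - u') (y' - x₁')) *
      ENNReal.ofReal (heatK (1 - u - u') (y' - x₂'))

theorem Wker_le_Wmajorant {θ C : ℝ} (hj : ∀ t ∈ Ioc (0 : ℝ) 1, jfn θ t ≤ C * exp (θ * t))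
    (x₁ x₂ x₁' x₂' : Plane) :
    Wker θ 1 x₁ x₂ x₁' x₂' ≤ Wmajorant (4 * π * C) θ x₁ x₂ x₁' x₂' := by
  refine setLIntegral_mono' measurableSet_Ioo fun u hu => ?_
  refine (setLIntegral_mono' measurableSet_Ioo fun u' hu' => ?_).trans
    (lintegral_mono_set Ioo_subset_Ioi_self)
  refine lintegral_mono fun y => lintegral_mono fun y' => ?_
  obtain ⟨hu0, -⟩ := hu
  obtain ⟨hu'0, hu'1⟩ := hu'
  have h₁ := heatK_nonneg hu0.le (x₁ - y)
  have h₂ := heatK_nonneg hu0.le (x₂ - y)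
  have h₃ := heatK_nonneg (half_pos hu'0).le (y - y')
  have h₄ := heatK_nonneg (by linarith : 0 ≤ 1 - u - u') (y' - x₁')
  have h₅ := heatK_nonneg (by linarith : 0 ≤ 1 - u - u') (y' - x₂')
  have hy : heatK u (y - x₂) = heatK u (x₂ - y) := by rw [heatK, heatK, norm_sub_rev]
  rw [hy, ← ofReal_mul' h₁, ← ofReal_mul' h₃, ← ofReal_mul' h₂, ← ofReal_mul' h₄,
    ← ofReal_mul' h₅]
  refine ENNReal.ofReal_le_ofReal ?_
  calc _ = jfn θ u' * (4 * π * (heatK u (x₁ - y) * heatK u (x₂ - y) * heatK (u' / 2) (y - y') *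
          heatK (1 - u - u') (y' - x₁') * heatK (1 - u - u') (y' - x₂'))) := by ring
    _ ≤ C * exp (θ * u') * (4 * π * (heatK u (x₁ - y) * heatK u (x₂ - y) *
          heatK (u' / 2) (y - y') * heatK (1 - u - u') (y' - x₁') *
          heatK (1 - u - u') (y' - x₂'))) :=
        mul_le_mul_of_nonneg_right (hj u' ⟨hu'0, by linarith⟩) (by positivity)
    _ = _ := by ring

theorem lintegral_Wmajorant_le {θ : ℝ} (hθ : θ < 0) (c : ℝ) (x₁ : Plane) :
    ∫⁻ x₂, ∫⁻ x₁', ∫⁻ x₂', Wmajorant c θ x₁ x₂ x₁' x₂' ≤ ENNReal.ofReal (c * (-θ)⁻¹) :=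
  calc ∫⁻ x₂, ∫⁻ x₁', ∫⁻ x₂', Wmajorant c θ x₁ x₂ x₁' x₂'
      ≤ ∫⁻ x₂, ∫⁻ x₁', ∫⁻ u in Ioo 0 1, ∫⁻ u' in Ioi 0, ∫⁻ y, ∫⁻ y',
          ENNReal.ofReal (c * exp (θ * u')) * ENNReal.ofReal (heatK u (x₁ - y)) *
            ENNReal.ofReal (heatK (u' / 2) (y - y')) * ENNReal.ofReal (heatK u (y - x₂)) *
            ENNReal.ofReal (heatK (1 - u - u') (y' - x₁')) :=
        lintegral_mono fun _ => lintegral_mono fun _ =>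
          lintegral_lintegral₄_mul_heatK_le (by fun_prop) (by fun_prop) (by fun_prop)
    _ ≤ ∫⁻ x₂, ∫⁻ u in Ioo 0 1, ∫⁻ u' in Ioi 0, ∫⁻ y, ∫⁻ y',
          ENNReal.ofReal (c * exp (θ * u')) * ENNReal.ofReal (heatK u (x₁ - y)) *
            ENNReal.ofReal (heatK (u' / 2) (y - y')) * ENNReal.ofReal (heatK u (y - x₂)) :=
        lintegral_mono fun _ =>
          lintegral_lintegral₄_mul_heatK_le (by fun_prop) (by fun_prop) (by fun_prop)
    _ ≤ ∫⁻ u in Ioo 0 1, ∫⁻ u' in Ioi 0, ∫⁻ y, ∫⁻ y',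
          ENNReal.ofReal (c * exp (θ * u')) * ENNReal.ofReal (heatK u (x₁ - y)) *
            ENNReal.ofReal (heatK (u' / 2) (y - y')) :=
        lintegral_lintegral₄_mul_heatK_le (by fun_prop) (by fun_prop) (by fun_prop)
    _ ≤ ∫⁻ u in Ioo 0 1, ∫⁻ u' in Ioi 0, ENNReal.ofReal (c * exp (θ * u')) :=
        lintegral_mono fun _ => lintegral_mono fun _ =>
          (lintegral_mono fun y => lintegral_mul_ofReal_heatK_sub_le _ _ y).trans
            (lintegral_mul_ofReal_heatK_sub_le _ _ _)
    _ = ENNReal.ofReal (c * (-θ)⁻¹) := by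
        simp_rw [ofReal_mul' (exp_nonneg _)]
        rw [lintegral_const_mul' _ _ ofReal_ne_top, lintegral_Ioi_ofReal_exp_mul hθ,
          setLIntegral_const, Real.volume_Ioo, sub_zero, ofReal_one, mul_one,
          ofReal_mul' (inv_nonneg.2 (neg_nonneg.2 hθ.le))]

theorem Npair_le {g g' : Plane → ℝ} {M M' C θ : ℝ} (hM : ∀ x, ‖g x‖ ≤ M)
    (hM' : ∀ x, ‖g' x‖ ≤ M') (hj : ∀ t ∈ Ioc (0 : ℝ) 1, jfn θ t ≤ C * exp (θ * t))
    (hθ : θ < 0) :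
    Npair g g' θ ≤ (∫⁻ x, ‖g x‖ₑ) * ENNReal.ofReal (M * M' ^ 2 * (4 * π * C) * (-θ)⁻¹) := by
  have hM0 : 0 ≤ M := (norm_nonneg _).trans (hM 0)
  have hgg : ∀ x₁ x₂, g x₁ * g x₂ ≤ ‖g x₁‖ * M := fun x₁ x₂ =>
    (le_abs_self _).trans <| by
      rw [abs_mul]; exact mul_le_mul_of_nonneg_left (hM x₂) (abs_nonneg _)
  have hg'g' : ∀ x₁' x₂', g' x₁' * g' x₂' ≤ M' ^ 2 := fun x₁' x₂' =>
    (le_abs_self _).trans <| by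
      rw [abs_mul, sq]
      exact mul_le_mul (hM' x₁') (hM' x₂') (abs_nonneg _) ((norm_nonneg _).trans (hM' 0))
  calc Npair g g' θ
      ≤ ∫⁻ x₁, ∫⁻ x₂, ∫⁻ x₁', ∫⁻ x₂',
          ‖g x₁‖ₑ * ENNReal.ofReal (M * M' ^ 2) * Wmajorant (4 * π * C) θ x₁ x₂ x₁' x₂' := by
        refine lintegral_mono fun x₁ => lintegral_mono fun x₂ => lintegral_mono fun x₁' =>
          lintegral_mono fun x₂' => ?_
        calc _ ≤ ENNReal.ofReal (‖g x₁‖ * M) * Wmajorant (4 * π * C) θ x₁ x₂ x₁' x₂' *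
              ENNReal.ofReal (M' ^ 2) :=
              mul_le_mul' (mul_le_mul' (ofReal_le_ofReal (hgg x₁ x₂))
                (Wker_le_Wmajorant hj x₁ x₂ x₁' x₂')) (ofReal_le_ofReal (hg'g' x₁' x₂'))
          _ = _ := by
              rw [ofReal_mul (norm_nonneg _), ofReal_norm, ofReal_mul hM0]
              ring
    _ = ∫⁻ x₁, ‖g x₁‖ₑ * ENNReal.ofReal (M * M' ^ 2) *
          ∫⁻ x₂, ∫⁻ x₁', ∫⁻ x₂', Wmajorant (4 * π * C) θ x₁ x₂ x₁' x₂' := by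
        have hfin : ∀ x₁, ‖g x₁‖ₑ * ENNReal.ofReal (M * M' ^ 2) ≠ ⊤ := fun x₁ =>
          mul_ne_top enorm_ne_top ofReal_ne_top
        simp_rw [lintegral_const_mul' _ _ (hfin _)]
    _ ≤ ∫⁻ x₁, ‖g x₁‖ₑ * ENNReal.ofReal (M * M' ^ 2) *
          ENNReal.ofReal (4 * π * C * (-θ)⁻¹) := by
        gcongr with x₁
        exact lintegral_Wmajorant_le hθ _ x₁
    _ = (∫⁻ x, ‖g x‖ₑ) * ENNReal.ofReal (M * M' ^ 2 * (4 * π * C) * (-θ)⁻¹) := by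
        rw [lintegral_mul_const' _ _ ofReal_ne_top, lintegral_mul_const' _ _ ofReal_ne_top,
          mul_assoc, ← ofReal_mul (by positivity), mul_assoc _ (4 * π * C)]

theorem tendsto_Npair_atBot {g g' : Plane → ℝ} (hgc : Continuous g) (hg'c : Continuous g')
    (hgs : HasCompactSupport g) (hg's : HasCompactSupport g') :
    Tendsto (Npair g g') atBot (𝓝 0) := by
  obtain ⟨M, hM⟩ := hgs.exists_bound_of_continuous hgc
  obtain ⟨M', hM'⟩ := hg's.exists_bound_of_continuous hg'c
  have hL : ∫⁻ x, ‖g x‖ₑ ≠ ⊤ := (hgc.integrable_of_hasCompactSupport hgs).hasFiniteIntegral.ne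
  set K := M * M' ^ 2 * (4 * π * (2 * exp 2 / Real.log 2))
  have hbound : ∀ᶠ θ in atBot, Npair g g' θ ≤ (∫⁻ x, ‖g x‖ₑ) * ENNReal.ofReal (K * (-θ)⁻¹) :=
    (eventually_lt_atBot 0).mono fun θ hθ => Npair_le hM hM' (fun t ht => jfn_le ht) hθ
  have hlim : Tendsto (fun θ => (∫⁻ x, ‖g x‖ₑ) * ENNReal.ofReal (K * (-θ)⁻¹)) atBot (𝓝 0) := by
    simpa using ENNReal.Tendsto.const_mul (ENNReal.tendsto_ofReal
      ((tendsto_inv_atTop_zero.comp tendsto_neg_atBot_atTop).const_mul K)) (Or.inr hL)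
  exact tendsto_of_tendsto_of_tendsto_of_le_of_le' tendsto_const_nhds hlim
    (Eventually.of_forall fun _ => zero_le) hbound

theorem Npair_ratio_tendsto_zero_general (g g' : Plane → ℝ)
    (hgc : Continuous g) (hg'c : Continuous g')
    (hgs : HasCompactSupport g) (hg's : HasCompactSupport g') (θ : ℝ) :
    Filter.Tendsto (fun τ : ℝ => (Npair g g' (θ - τ)).toReal / (Npair g g' θ).toReal)
      Filter.atTop (nhds 0) ∧
    Filter.Tendsto (fun θbar : ℝ => (Npair g g' θbar).toReal)
      Filter.atBot (nhds 0) := by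
  have hN : Tendsto (fun θ' => (Npair g g' θ').toReal) atBot (𝓝 0) :=
    (ENNReal.tendsto_toReal zero_ne_top).comp (tendsto_Npair_atBot hgc hg'c hgs hg's)
  refine ⟨?_, hN⟩
  simpa [sub_eq_add_neg] using
    (hN.comp (tendsto_atBot_add_const_left _ θ tendsto_neg_atTop_atBot)).div_const
      (Npair g g' θ).toReal

/-- For continuous, compactly supported, nonnegative, not-identically-zero `g, g'` and fixed
`θ ∈ ℝ`, the ratio `N_{g,g'}(θ − τ̄)/N_{g,g'}(θ)` tends to `0` as `τ̄ → ∞`; equivalently,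
`N_{g,g'}(θ̄) → 0` as `θ̄ → −∞`. -/
theorem Npair_ratio_tendsto_zero (g g' : Plane → ℝ)
    (hgc : Continuous g) (hg'c : Continuous g')
    (hgs : HasCompactSupport g) (hg's : HasCompactSupport g')
    (hg0 : ∀ x, 0 ≤ g x) (hg'0 : ∀ x, 0 ≤ g' x)
    (hgne : g ≠ 0) (hg'ne : g' ≠ 0) (θ : ℝ) :
    Filter.Tendsto (fun τ : ℝ => (Npair g g' (θ - τ)).toReal / (Npair g g' θ).toReal)
      Filter.atTop (nhds 0) ∧
    Filter.Tendsto (fun θbar : ℝ => (Npair g g' θbar).toReal)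
      Filter.atBot (nhds 0) :=
  Npair_ratio_tendsto_zero_general g g' hgc hg'c hgs hg's θ

end
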